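/- arXiv:1908.01029 — 4 statements merged into one kernel-verified Lean document; each statement's English description precedes it below -/
import Mathlib

section
/- Let S be a finite set, f : 2^S → ℝ be monotone and submodular, and c : S → ℝ be a positive cost function with c(X) = ∑_{a∈X} c(a). For all A, B ⊆ S with f(A ∪ B) > f(A), there exists b ∈ B \ A such that (f(A ∪ {b}) - f(A))/c(b) ≥ (f(A ∪ B) - f(A))/c(B). -/
/-! Submodularity bounds the total gain `f (A ∪ B) - f A` by the sum of the single-element
gains over `B \ A`. If every element of `B \ A` had gain-per-cost below
`r = (f (A ∪ B) - f A) / c(B)`, these gains would sum to less than `r * c(B \ A) ≤ r * c(B)`,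
which is the total gain. -/

open Finset

lemma sub_le_sum_marginal_gains {α : Type*} [DecidableEq α] (f : Finset α → ℝ)
    (hsub : ∀ A B : Finset α, A ⊆ B → ∀ x : α, x ∉ B →
      f (insert x A) - f A ≥ f (insert x B) - f B)
    (A : Finset α) {D : Finset α} (hD : Disjoint A D) :
    f (A ∪ D) - f A ≤ ∑ b ∈ D, (f (insert b A) - f A) := by
  induction D using Finset.induction_on with
  | empty => simp
  | insert x D hx ih =>
    rw [disjoint_insert_right] at hD
    have hgain := hsub A (A ∪ D) subset_union_left x (by simp [hD.1, hx])
    rw [sum_insert hx, union_insert]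
    linarith [ih hD.2]

theorem exists_cost_effective_element_general {α : Type*} [DecidableEq α]
    (f : Finset α → ℝ)
    (hsub : ∀ A B : Finset α, A ⊆ B → ∀ x : α, x ∉ B →
      f (insert x A) - f A ≥ f (insert x B) - f B)
    (c : α → ℝ) (hc : ∀ a : α, 0 < c a)
    (A B : Finset α) (hAB : f (A ∪ B) > f A) :
    ∃ b ∈ B \ A,
      (f (insert b A) - f A) / c b ≥ (f (A ∪ B) - f A) / (∑ a ∈ B, c a) := by
  set r := (f (A ∪ B) - f A) / (∑ a ∈ B, c a)
  have hBA : (B \ A).Nonempty := sdiff_nonempty.mpr fun hBA => by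
    rw [union_eq_left.mpr hBA] at hAB
    exact lt_irrefl _ hAB
  have hcB : 0 < ∑ a ∈ B, c a := sum_pos (fun a _ => hc a) (hBA.mono sdiff_subset)
  have hr : 0 ≤ r := div_nonneg (sub_nonneg.mpr hAB.le) hcB.le
  have hsum : ∑ b ∈ B \ A, r * c b ≤ ∑ b ∈ B \ A, (f (insert b A) - f A) :=
    calc ∑ b ∈ B \ A, r * c b
        ≤ r * ∑ a ∈ B, c a := by
          rw [← mul_sum]
          exact mul_le_mul_of_nonneg_left
            (sum_le_sum_of_subset_of_nonneg sdiff_subset fun a _ _ => (hc a).le) hr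
      _ = f (A ∪ B) - f A := div_mul_cancel₀ _ hcB.ne'
      _ = f (A ∪ (B \ A)) - f A := by rw [union_sdiff_self_eq_union]
      _ ≤ _ := sub_le_sum_marginal_gains f hsub A disjoint_sdiff
  obtain ⟨b, hb, hle⟩ := exists_le_of_sum_le hBA hsum
  exact ⟨b, hb, (le_div_iff₀ (hc b)).mpr hle⟩

/-- If f is monotone, submodular, and c is a positive cost
    function, then for all A, B with f(A ∪ B) > f(A) there exists b ∈ B \ A
    with (f(A ∪ {b}) - f(A))/c(b) ≥ (f(A ∪ B) - f(A))/c(B). -/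
theorem exists_cost_effective_element {α : Type*} [Fintype α] [DecidableEq α]
    (f : Finset α → ℝ)
    (hmono : ∀ A B : Finset α, A ⊆ B → f A ≤ f B)
    (hsub : ∀ A B : Finset α, A ⊆ B → ∀ x : α, x ∉ B →
      f (insert x A) - f A ≥ f (insert x B) - f B)
    (c : α → ℝ) (hc : ∀ a : α, 0 < c a)
    (A B : Finset α) (hAB : f (A ∪ B) > f A) :
    ∃ b ∈ B \ A,
      (f (insert b A) - f A) / c b ≥ (f (A ∪ B) - f A) / (∑ a ∈ B, c a) :=
  exists_cost_effective_element_general f hsub c hc A B hAB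
end

section
/- Let S be a finite set, f : 2^S → ℝ be monotone and submodular, c : S → ℝ a positive cost function with c(X) = ∑_{a∈X} c(a), and let τ ∈ ℝ. Let A ⊆ S and A* ⊆ S satisfy f(A*) ≥ τ and f(A) < τ. If a ∈ S \ A maximizes the ratio (f(A ∪ {x}) - f(A))/c(x) over all x ∈ S \ A (i.e., a is the element chosen by the greedy algorithm at the step with current solution A), then f(A ∪ {a}) - f(A) ≥ (c(a)/c(A*))·(τ - f(A)). -/
/-!
By submodularity, the gain of adding all of `A*` to `A` is at most the sum of the single-element
gains `f (A ∪ {x}) - f A` over `x ∈ A*`, and by the greedy choice each of these is at most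
`c x` times the greedy ratio `r` of `a`. Monotonicity makes that total gain at least `τ - f A`,
so `τ - f A ≤ c(A*) · r`, which rearranges to the claim.
-/

section MarginalGain

variable {α : Type*} [DecidableEq α]

def marginalGain (f : Finset α → ℝ) (A : Finset α) (x : α) : ℝ :=
  f (insert x A) - f A

lemma marginalGain_of_mem {f : Finset α → ℝ} {A : Finset α} {x : α} (hx : x ∈ A) :
    marginalGain f A x = 0 := by
  simp [marginalGain, Finset.insert_eq_of_mem hx]

lemma marginalGain_nonneg {f : Finset α → ℝ} (hmono : Monotone f) (A : Finset α) (x : α) :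
    0 ≤ marginalGain f A x :=
  sub_nonneg.mpr (hmono (Finset.subset_insert x A))

lemma sub_le_sum_marginalGain {f : Finset α → ℝ}
    (hsub : ∀ A B : Finset α, A ⊆ B → ∀ x : α, x ∉ B →
      f (insert x A) - f A ≥ f (insert x B) - f B)
    (A B : Finset α) : f (A ∪ B) - f A ≤ ∑ x ∈ B, marginalGain f A x := by
  induction B using Finset.induction with
  | empty => simp
  | @insert x B hxB ih =>
    rw [Finset.sum_insert hxB, Finset.union_insert]
    by_cases hxA : x ∈ A
    · rw [Finset.insert_eq_of_mem (Finset.mem_union_left B hxA), marginalGain_of_mem hxA]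
      linarith
    · have hdim : f (insert x (A ∪ B)) - f (A ∪ B) ≤ marginalGain f A x :=
        hsub A (A ∪ B) Finset.subset_union_left x (by simp [hxA, hxB])
      linarith

section Greedy

variable {f : Finset α → ℝ} {c : α → ℝ} {A : Finset α} {a : α}

lemma marginalGain_le_mul_greedyRatio (hmono : Monotone f) (hc : ∀ x, 0 < c x)
    (hmax : ∀ x, x ∉ A → marginalGain f A x / c x ≤ marginalGain f A a / c a) (x : α) :
    marginalGain f A x ≤ c x * (marginalGain f A a / c a) := by
  by_cases hxA : x ∈ A
  · rw [marginalGain_of_mem hxA]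
    exact mul_nonneg (hc x).le (div_nonneg (marginalGain_nonneg hmono A a) (hc a).le)
  · rw [mul_comm, ← div_le_iff₀ (hc x)]
    exact hmax x hxA

lemma sub_le_cost_mul_greedyRatio (hmono : Monotone f)
    (hsub : ∀ A B : Finset α, A ⊆ B → ∀ x : α, x ∉ B →
      f (insert x A) - f A ≥ f (insert x B) - f B)
    (hc : ∀ x, 0 < c x)
    (hmax : ∀ x, x ∉ A → marginalGain f A x / c x ≤ marginalGain f A a / c a) (B : Finset α) :
    f (A ∪ B) - f A ≤ (∑ x ∈ B, c x) * (marginalGain f A a / c a) :=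
  calc f (A ∪ B) - f A ≤ ∑ x ∈ B, marginalGain f A x := sub_le_sum_marginalGain hsub A B
    _ ≤ ∑ x ∈ B, c x * (marginalGain f A a / c a) :=
      Finset.sum_le_sum fun x _ => marginalGain_le_mul_greedyRatio hmono hc hmax x
    _ = (∑ x ∈ B, c x) * (marginalGain f A a / c a) := (Finset.sum_mul ..).symm

end Greedy

end MarginalGain

theorem greedy_marginal_gain_lower_bound_general {α : Type*} [DecidableEq α]
    (f : Finset α → ℝ)
    (hmono : ∀ A B : Finset α, A ⊆ B → f A ≤ f B)
    (hsub : ∀ A B : Finset α, A ⊆ B → ∀ x : α, x ∉ B →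
      f (insert x A) - f A ≥ f (insert x B) - f B)
    (c : α → ℝ) (hc : ∀ a : α, 0 < c a)
    (τ : ℝ) (A Astar : Finset α)
    (hAstar : f Astar ≥ τ) (hA : f A < τ)
    (a : α)
    (hmax : ∀ x : α, x ∉ A →
      (f (insert x A) - f A) / c x ≤ (f (insert a A) - f A) / c a) :
    f (insert a A) - f A ≥ (c a / (∑ x ∈ Astar, c x)) * (τ - f A) := by
  have hmono' : Monotone f := fun _ _ => hmono _ _
  set r := marginalGain f A a / c a
  set C := ∑ x ∈ Astar, c x
  have hcover : τ - f A ≤ C * r := calc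
    τ - f A ≤ f (A ∪ Astar) - f A := by
      linarith [hmono Astar (A ∪ Astar) Finset.subset_union_right]
    _ ≤ C * r := sub_le_cost_mul_greedyRatio hmono' hsub hc hmax Astar
  have hC : 0 < C :=
    pos_of_mul_pos_left (by linarith) (div_nonneg (marginalGain_nonneg hmono' A a) (hc a).le)
  calc c a / C * (τ - f A) ≤ c a / C * (C * r) := by gcongr; exact (div_pos (hc a) hC).le
    _ = c a * r := by field_simp
    _ = f (insert a A) - f A := mul_div_cancel₀ _ (hc a).ne'

/-- If f(A*) ≥ τ, f(A) < τ, and a ∈ S \ A maximizes the marginal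
    gain per unit cost over S \ A, then
    f(A ∪ {a}) - f(A) ≥ (c(a)/c(A*))·(τ - f(A)). -/
theorem greedy_marginal_gain_lower_bound {α : Type*} [Fintype α] [DecidableEq α]
    (f : Finset α → ℝ)
    (hmono : ∀ A B : Finset α, A ⊆ B → f A ≤ f B)
    (hsub : ∀ A B : Finset α, A ⊆ B → ∀ x : α, x ∉ B →
      f (insert x A) - f A ≥ f (insert x B) - f B)
    (c : α → ℝ) (hc : ∀ a : α, 0 < c a)
    (τ : ℝ) (A Astar : Finset α)
    (hAstar : f Astar ≥ τ) (hA : f A < τ)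
    (a : α) (ha : a ∉ A)
    (hmax : ∀ x : α, x ∉ A →
      (f (insert x A) - f A) / c x ≤ (f (insert a A) - f A) / c a) :
    f (insert a A) - f A ≥ (c a / (∑ x ∈ Astar, c x)) * (τ - f A) :=
  greedy_marginal_gain_lower_bound_general f hmono hsub c hc τ A Astar hAstar hA a hmax
end

section
/- Let S be a finite set, f : 2^S → ℝ be monotone and submodular, c : S → ℝ a positive cost function with c(X) = ∑_{a∈X} c(a), and τ ∈ ℝ. Let A ⊆ S and A* ⊆ S satisfy f(A*) ≥ τ and f(A) < τ, and let a ∈ S \ A maximize (f(A ∪ {x}) - f(A))/c(x) over x ∈ S \ A. Then τ - f(A ∪ {a}) ≤ (1 - c(a)/c(A*))·(τ - f(A)). -/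
/-! Submodularity bounds the gain `f (A ∪ A*) - f A ≥ τ - f A` by the sum of the single-element
gains `f (A ∪ {x}) - f A` over `x ∈ A* \ A`, and each of these is at most `c x` times the best
gain-per-cost ratio `r`, attained by `a`. Hence `τ - f A ≤ c(A*) · r`, while the greedy step
gains `c a · r ≥ (c a / c(A*)) · (τ - f A)`. -/

open Finset

section

variable {α : Type*} [DecidableEq α]

theorem sub_le_sum_marginal_of_submodular (f : Finset α → ℝ)
    (hsub : ∀ A B : Finset α, A ⊆ B → ∀ x : α, x ∉ B →
      f (insert x A) - f A ≥ f (insert x B) - f B)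
    (A B : Finset α) :
    f (A ∪ B) - f A ≤ ∑ x ∈ B \ A, (f (insert x A) - f A) := by
  induction B using Finset.induction_on with
  | empty => simp
  | @insert x B hxB ih =>
    rw [union_insert]
    by_cases hxA : x ∈ A
    · rwa [insert_eq_of_mem (mem_union_left B hxA), insert_sdiff_of_mem B hxA]
    · have hx : x ∉ A ∪ B := by simp [hxA, hxB]
      rw [insert_sdiff_of_notMem B hxA, sum_insert (by simp [hxB])]
      linarith [hsub A (A ∪ B) subset_union_left x hx]

theorem sub_le_sum_mul_of_marginal_le (f : Finset α → ℝ)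
    (hsub : ∀ A B : Finset α, A ⊆ B → ∀ x : α, x ∉ B →
      f (insert x A) - f A ≥ f (insert x B) - f B)
    (c : α → ℝ) (hc : ∀ x, 0 ≤ c x) {r : ℝ} (hr : 0 ≤ r) (A B : Finset α)
    (hmarg : ∀ x ∉ A, f (insert x A) - f A ≤ c x * r) :
    f (A ∪ B) - f A ≤ (∑ x ∈ B, c x) * r :=
  calc f (A ∪ B) - f A ≤ ∑ x ∈ B \ A, (f (insert x A) - f A) :=
        sub_le_sum_marginal_of_submodular f hsub A B
    _ ≤ ∑ x ∈ B \ A, c x * r := sum_le_sum fun x hx => hmarg x (mem_sdiff.1 hx).2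
    _ = (∑ x ∈ B \ A, c x) * r := (sum_mul ..).symm
    _ ≤ (∑ x ∈ B, c x) * r :=
        mul_le_mul_of_nonneg_right (sum_le_sum_of_subset_of_nonneg sdiff_subset
          fun x _ _ => hc x) hr

end

theorem greedy_residual_gap_bound_general {α : Type*} [DecidableEq α]
    (f : Finset α → ℝ)
    (hmono : ∀ A B : Finset α, A ⊆ B → f A ≤ f B)
    (hsub : ∀ A B : Finset α, A ⊆ B → ∀ x : α, x ∉ B →
      f (insert x A) - f A ≥ f (insert x B) - f B)
    (c : α → ℝ) (hc : ∀ a : α, 0 < c a)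
    (τ : ℝ) (A Astar : Finset α)
    (hAstar : f Astar ≥ τ)
    (a : α)
    (hmax : ∀ x : α, x ∉ A →
      (f (insert x A) - f A) / c x ≤ (f (insert a A) - f A) / c a) :
    τ - f (insert a A) ≤ (1 - c a / (∑ x ∈ Astar, c x)) * (τ - f A) := by
  set r := (f (insert a A) - f A) / c a
  set C := ∑ x ∈ Astar, c x
  have hgain : f (insert a A) - f A = c a * r := (mul_div_cancel₀ _ (hc a).ne').symm
  have hr : 0 ≤ r := div_nonneg (sub_nonneg.2 (hmono _ _ (subset_insert a A))) (hc a).le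
  have hgap : τ - f A ≤ C * r :=
    calc τ - f A ≤ f (A ∪ Astar) - f A := by
          linarith [hmono Astar (A ∪ Astar) subset_union_right]
      _ ≤ C * r := sub_le_sum_mul_of_marginal_le f hsub c (fun x => (hc x).le) hr A Astar
          fun x hx => (div_le_iff₀' (hc x)).1 (hmax x hx)
  have hC : 0 ≤ C := sum_nonneg fun x _ => (hc x).le
  have hstep : c a / C * (τ - f A) ≤ c a * r := by
    rcases hC.eq_or_lt with hC0 | hCpos
    -- `C = 0` means `A* = ∅`, where the junk value `c a / 0 = 0` leaves only monotonicity to show.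
    · rw [← hC0, div_zero, zero_mul]
      exact mul_nonneg (hc a).le hr
    · calc c a / C * (τ - f A) ≤ c a / C * (C * r) :=
            mul_le_mul_of_nonneg_left hgap (div_nonneg (hc a).le hC)
        _ = c a * r := by field_simp
  linarith

/-- Residual-gap form of the greedy bound: under the hypotheses of
    Statement 4, τ - f(A ∪ {a}) ≤ (1 - c(a)/c(A*))·(τ - f(A)). -/
theorem greedy_residual_gap_bound {α : Type*} [Fintype α] [DecidableEq α]
    (f : Finset α → ℝ)
    (hmono : ∀ A B : Finset α, A ⊆ B → f A ≤ f B)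
    (hsub : ∀ A B : Finset α, A ⊆ B → ∀ x : α, x ∉ B →
      f (insert x A) - f A ≥ f (insert x B) - f B)
    (c : α → ℝ) (hc : ∀ a : α, 0 < c a)
    (τ : ℝ) (A Astar : Finset α)
    (hAstar : f Astar ≥ τ) (hA : f A < τ)
    (a : α) (ha : a ∉ A)
    (hmax : ∀ x : α, x ∉ A →
      (f (insert x A) - f A) / c x ≤ (f (insert a A) - f A) / c a) :
    τ - f (insert a A) ≤ (1 - c a / (∑ x ∈ Astar, c x)) * (τ - f A) :=
  greedy_residual_gap_bound_general f hmono hsub c hc τ A Astar hAstar a hmax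
end

section
/- Let S be a finite set, f : 2^S → ℝ be monotone and submodular with f(∅) = 0, let c : S → ℝ be a positive cost function with c(X) = ∑_{a∈X} c(a), let τ > 0, and let A* ⊆ S satisfy f(A*) ≥ τ. Let a_1, ..., a_k be a sequence of distinct elements of S with A_i = {a_1, ..., a_i} (and A_0 = ∅), such that for each 0 ≤ i < k, f(A_i) < τ and a_{i+1} maximizes (f(A_i ∪ {x}) - f(A_i))/c(x) over x ∈ S \ A_i. Then for every 1 ≤ i ≤ k with f(A_i) < τ, it holds that c(A_i)/ln(τ/(τ - f(A_i))) ≤ c(A*). -/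
/-!
Write `C = c(A*)` and `r` for the best marginal gain per unit cost at `A_j`. By submodularity
the elements of `A*` together gain at most `C * r` over `A_j`, and they reach `τ`, so
`τ - f(A_j) ≤ C * r`. Adding `a_{j+1}` gains `r * c(a_{j+1})`, hence the gap `τ - f` shrinks
by the factor `1 - c(a_{j+1}) / C ≤ exp (-c(a_{j+1}) / C)`. Multiplying these factors,
`τ - f(A_i) ≤ τ * exp (-c(A_i) / C)`, and taking logarithms gives the claim.
-/

open Finset Real

section Submodular

variable {α : Type*} [DecidableEq α] {f : Finset α → ℝ}

theorem sub_le_sum_marginal_of_disjoint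
    (hsub : ∀ A B : Finset α, A ⊆ B → ∀ x : α, x ∉ B →
      f (insert x A) - f A ≥ f (insert x B) - f B)
    (B T : Finset α) (hTB : Disjoint T B) :
    f (B ∪ T) - f B ≤ ∑ x ∈ T, (f (insert x B) - f B) := by
  induction T using Finset.induction_on with
  | empty => simp
  | @insert x T hxT ih =>
    have hxB : x ∉ B := disjoint_left.mp hTB (mem_insert_self x T)
    have hmarg : f (insert x (B ∪ T)) - f (B ∪ T) ≤ f (insert x B) - f B :=
      hsub B (B ∪ T) subset_union_left x (by simp [hxB, hxT])
    have := ih (hTB.mono_left (subset_insert x T))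
    rw [union_insert, sum_insert hxT]
    linarith

theorem sub_le_sum_mul_of_marginal_div_le
    (hmono : ∀ A B : Finset α, A ⊆ B → f A ≤ f B)
    (hsub : ∀ A B : Finset α, A ⊆ B → ∀ x : α, x ∉ B →
      f (insert x A) - f A ≥ f (insert x B) - f B)
    {c : α → ℝ} (hc : ∀ a : α, 0 < c a) {B T : Finset α} {r : ℝ} (hr : 0 ≤ r)
    (hratio : ∀ x ∉ B, (f (insert x B) - f B) / c x ≤ r) :
    f T - f B ≤ (∑ x ∈ T, c x) * r := by
  have hunion : f T ≤ f (B ∪ (T \ B)) := hmono _ _ (by simp)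
  calc f T - f B ≤ f (B ∪ (T \ B)) - f B := by linarith
    _ ≤ ∑ x ∈ T \ B, (f (insert x B) - f B) :=
        sub_le_sum_marginal_of_disjoint hsub B (T \ B) sdiff_disjoint
    _ ≤ ∑ x ∈ T \ B, c x * r := sum_le_sum fun x hx =>
        (div_le_iff₀' (hc x)).mp (hratio x (mem_sdiff.mp hx).2)
    _ = (∑ x ∈ T \ B, c x) * r := (sum_mul ..).symm
    _ ≤ (∑ x ∈ T, c x) * r := mul_le_mul_of_nonneg_right
        (sum_le_sum_of_subset_of_nonneg sdiff_subset fun x _ _ => (hc x).le) hr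

theorem sub_insert_le_mul_one_sub_of_greedy
    (hmono : ∀ A B : Finset α, A ⊆ B → f A ≤ f B)
    (hsub : ∀ A B : Finset α, A ⊆ B → ∀ x : α, x ∉ B →
      f (insert x A) - f A ≥ f (insert x B) - f B)
    {c : α → ℝ} (hc : ∀ a : α, 0 < c a) {T B : Finset α} {τ : ℝ} (hT : τ ≤ f T)
    (hCpos : 0 < ∑ x ∈ T, c x) {a : α}
    (hmax : ∀ x ∉ B, (f (insert x B) - f B) / c x ≤ (f (insert a B) - f B) / c a) :
    τ - f (insert a B) ≤ (τ - f B) * (1 - c a / ∑ x ∈ T, c x) := by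
  set C := ∑ x ∈ T, c x
  set r := (f (insert a B) - f B) / c a
  have hr : 0 ≤ r := div_nonneg (sub_nonneg.mpr (hmono _ _ (subset_insert a B))) (hc a).le
  have hgap : τ - f B ≤ C * r := by
    have := sub_le_sum_mul_of_marginal_div_le hmono hsub hc hr hmax (T := T)
    linarith
  have hgain : f (insert a B) - f B = r * c a := (div_mul_cancel₀ _ (hc a).ne').symm
  have hshrink : (τ - f B) * (c a / C) ≤ r * c a :=
    calc (τ - f B) * (c a / C) ≤ C * r * (c a / C) :=
          mul_le_mul_of_nonneg_right hgap (div_pos (hc a) hCpos).le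
      _ = r * c a := by field_simp
  linarith [mul_one_sub (τ - f B) (c a / C)]

end Submodular

theorem le_mul_exp_neg_sum_of_le_mul_one_sub {g d : ℕ → ℝ} {b : ℝ} {n : ℕ} (h0 : g 0 ≤ b)
    (hnonneg : ∀ j < n, 0 ≤ g j) (hstep : ∀ j < n, g (j + 1) ≤ g j * (1 - d j)) :
    g n ≤ b * exp (-∑ j ∈ range n, d j) := by
  induction n with
  | zero => simpa using h0
  | succ n ih =>
    have ih := ih (fun j hj => hnonneg j (by omega)) (fun j hj => hstep j (by omega))
    calc g (n + 1) ≤ g n * (1 - d n) := hstep n n.lt_succ_self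
      _ ≤ g n * exp (-d n) := mul_le_mul_of_nonneg_left
          (by linarith [add_one_le_exp (-d n)]) (hnonneg n n.lt_succ_self)
      _ ≤ b * exp (-∑ j ∈ range n, d j) * exp (-d n) :=
          mul_le_mul_of_nonneg_right ih (exp_pos _).le
      _ = b * exp (-∑ j ∈ range (n + 1), d j) := by
          rw [mul_assoc, ← exp_add, sum_range_succ, neg_add]

theorem div_log_div_le_of_le_mul_exp {g τ s C : ℝ} (hg : 0 < g) (hs : 0 < s) (hC : 0 < C)
    (hle : g ≤ τ * exp (-(s / C))) :
    s / log (τ / g) ≤ C := by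
  have hratio : exp (s / C) ≤ τ / g := by
    rw [le_div_iff₀ hg, ← le_div_iff₀' (exp_pos _), div_eq_mul_inv, ← exp_neg]
    exact hle
  have hlog : s / C ≤ log (τ / g) :=
    (le_log_iff_exp_le ((exp_pos _).trans_le hratio)).mpr hratio
  rw [div_le_iff₀ ((div_pos hs hC).trans_le hlog)]
  rw [div_le_iff₀ hC] at hlog
  linarith

theorem greedy_prefix_cost_effectiveness_general {α : Type*} [DecidableEq α]
    (f : Finset α → ℝ)
    (hmono : ∀ A B : Finset α, A ⊆ B → f A ≤ f B)
    (hsub : ∀ A B : Finset α, A ⊆ B → ∀ x : α, x ∉ B →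
      f (insert x A) - f A ≥ f (insert x B) - f B)
    (hf0 : f ∅ = 0)
    (c : α → ℝ) (hc : ∀ a : α, 0 < c a)
    (τ : ℝ)
    (Astar : Finset α) (hAstar : f Astar ≥ τ)
    (k : ℕ) (a : ℕ → α)
    (hdistinct : ∀ i < k, ∀ j < k, a i = a j → i = j)
    (A : ℕ → Finset α) (hA : ∀ i, A i = Finset.image a (Finset.range i))
    (hlt : ∀ i < k, f (A i) < τ)
    (hmax : ∀ i < k, ∀ x : α, x ∉ A i →
      (f (insert x (A i)) - f (A i)) / c x ≤
        (f (insert (a i) (A i)) - f (A i)) / c (a i)) :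
    ∀ i, 1 ≤ i → i ≤ k → f (A i) < τ →
      (∑ x ∈ A i, c x) / Real.log (τ / (τ - f (A i))) ≤ ∑ x ∈ Astar, c x := by
  intro i hi hik hfi
  have hA0 : A 0 = ∅ := by simp [hA]
  have hAstar_ne : Astar.Nonempty := nonempty_iff_ne_empty.mpr fun h => by
    have := hlt 0 (by omega)
    rw [hA0, hf0] at this
    rw [h, hf0] at hAstar
    linarith
  have hC : 0 < ∑ x ∈ Astar, c x := sum_pos (fun x _ => hc x) hAstar_ne
  have hAsucc (j : ℕ) : A (j + 1) = insert (a j) (A j) := by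
    rw [hA, hA, range_add_one, image_insert]
  have hcost : ∑ x ∈ A i, c x = ∑ j ∈ range i, c (a j) := by
    rw [hA, sum_image fun j hj l hl => hdistinct j (by simp at hj; omega) l (by simp at hl; omega)]
  have hgap := le_mul_exp_neg_sum_of_le_mul_one_sub (g := fun j => τ - f (A j))
    (d := fun j => c (a j) / ∑ x ∈ Astar, c x) (b := τ) (n := i)
    (by simp [hA0, hf0]) (fun j hj => by linarith [hlt j (by omega)])
    (fun j hj => hAsucc j ▸
      sub_insert_le_mul_one_sub_of_greedy hmono hsub hc hAstar hC (hmax j (by omega)))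
  rw [← sum_div, ← hcost] at hgap
  exact div_log_div_le_of_le_mul_exp (by linarith) (sum_pos (fun x _ => hc x)
    (by simp [hA]; omega)) hC hgap

/-- Along the greedy sequence a_1, ..., a_k (here 0-indexed as
    a 0, ..., a (k-1), with A i = {a 0, ..., a (i-1)}), every prefix A_i with
    f(A_i) < τ satisfies c(A_i)/ln(τ/(τ - f(A_i))) ≤ c(A*). -/
theorem greedy_prefix_cost_effectiveness {α : Type*} [Fintype α] [DecidableEq α]
    (f : Finset α → ℝ)
    (hmono : ∀ A B : Finset α, A ⊆ B → f A ≤ f B)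
    (hsub : ∀ A B : Finset α, A ⊆ B → ∀ x : α, x ∉ B →
      f (insert x A) - f A ≥ f (insert x B) - f B)
    (hf0 : f ∅ = 0)
    (c : α → ℝ) (hc : ∀ a : α, 0 < c a)
    (τ : ℝ) (hτ : 0 < τ)
    (Astar : Finset α) (hAstar : f Astar ≥ τ)
    (k : ℕ) (a : ℕ → α)
    (hdistinct : ∀ i < k, ∀ j < k, a i = a j → i = j)
    (A : ℕ → Finset α) (hA : ∀ i, A i = Finset.image a (Finset.range i))
    (hlt : ∀ i < k, f (A i) < τ)
    (hnotmem : ∀ i < k, a i ∉ A i)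
    (hmax : ∀ i < k, ∀ x : α, x ∉ A i →
      (f (insert x (A i)) - f (A i)) / c x ≤
        (f (insert (a i) (A i)) - f (A i)) / c (a i)) :
    ∀ i, 1 ≤ i → i ≤ k → f (A i) < τ →
      (∑ x ∈ A i, c x) / Real.log (τ / (τ - f (A i))) ≤ ∑ x ∈ Astar, c x :=
  greedy_prefix_cost_effectiveness_general f hmono hsub hf0 c hc τ Astar hAstar k a hdistinct A hA
    hlt hmax
end
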